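/- arXiv:2603.14547 — 3 statements merged into one kernel-verified Lean document; each statement's English description precedes it below -/
import Mathlib

section
/- Let A ∈ ℝ^{m×n} have full column rank, w ∈ Δ_m°, μ > 0, r ∈ ℝ^m. Assume (a) the vectors u = (1,…,1)ᵀ and r² = (r_1²,…,r_m²)ᵀ are linearly independent, and (b) the matrix B = I_m - 2μ diag(r²) is positive definite on Range(W^{1/2}A). Then the (2+m+n)×(2+m+n) block matrix J = [[0,0,uᵀ,0],[0,0,(r²)ᵀ,0],[u,r²,W⁻¹,2μdiag(r)A],[0,0,(diag(r)A)ᵀ,AᵀWA]] is nonsingular. -/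
open Matrix

/-! If `J (λ, y, x) = 0`, put `t = A x` and `g = λ₁ u + λ₂ r²`, with entrywise products of
vectors. The middle block row gives `y = -W (g + 2μ r t)`, the constraint rows give `g ⬝ y = 0`,
and pairing the last block row with `x` gives `(r y + W t) ⬝ t = 0`. Eliminating `y` from these
two scalar equations yields `2μ vᵀ B v + gᵀ W g = 0` for `v = W^{1/2} A x`, so both terms vanish:
hence `t = 0` and `g = 0`, then `λ = 0` by the independence of `u` and `r²`, `y = 0`, and `x = 0`
by full column rank. -/

theorem Matrix.mulVec_injective_of_rank_eq_card {m n K : Type*} [Fintype m] [Fintype n] [Field K]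
    {A : Matrix m n K} (hA : A.rank = Fintype.card n) : Function.Injective A.mulVec :=
  mulVec_injective_iff.mpr <| linearIndependent_iff_card_eq_finrank_span.mpr <| by
    rw [Set.finrank, ← rank_eq_finrank_span_cols, hA]

theorem Matrix.diagonal_mulVec_eq_mul {n α : Type*} [Fintype n] [DecidableEq n]
    [NonUnitalNonAssocSemiring α] (v u : n → α) : diagonal v *ᵥ u = v * u :=
  funext (mulVec_diagonal v u)

theorem Matrix.inv_diagonal_of_ne_zero {n K : Type*} [Fintype n] [DecidableEq n] [Field K]
    {v : n → K} (hv : ∀ i, v i ≠ 0) : (diagonal v)⁻¹ = diagonal v⁻¹ :=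
  inv_eq_right_inv <| by
    rw [diagonal_mul_diagonal, ← diagonal_one]
    exact congrArg diagonal (funext fun i => mul_inv_cancel₀ (hv i))

theorem eq_zero_of_sum_mul_sq_eq_zero {ι : Type*} [Fintype ι] {w g : ι → ℝ} (hw : ∀ i, 0 < w i)
    (h : ∑ i, w i * g i ^ 2 = 0) : g = 0 :=
  funext fun i => by
    have := (Finset.sum_eq_zero_iff_of_nonneg fun j _ => mul_nonneg (hw j).le (sq_nonneg (g j))).mp
      h i (Finset.mem_univ i)
    simpa [(hw i).ne'] using this

section Stationarity

variable {κ ι ν : Type*} [Fintype κ] [Fintype ι] [Fintype ν]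

theorem stationarity_energy_identity {w r g t y : ι → ℝ} {μ : ℝ}
    (hy : y = -(w * (g + (2 * μ) • (r * t)))) :
    2 * μ * ((r * y + w * t) ⬝ᵥ t) - g ⬝ᵥ y =
      2 * μ * ∑ i, w i * t i ^ 2 * (1 - 2 * μ * r i ^ 2) + ∑ i, w i * g i ^ 2 := by
  simp only [hy, dotProduct, Pi.mul_apply, Pi.add_apply, Pi.neg_apply, Pi.smul_apply, smul_eq_mul,
    Finset.mul_sum, ← Finset.sum_sub_distrib, ← Finset.sum_add_distrib]
  exact Finset.sum_congr rfl fun i _ => by ring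

variable [DecidableEq ι]

noncomputable def stationarityJacobian (C : Matrix κ ι ℝ) (A : Matrix ι ν ℝ) (w r : ι → ℝ) (μ : ℝ) :
    Matrix (κ ⊕ (ι ⊕ ν)) (κ ⊕ (ι ⊕ ν)) ℝ :=
  fromBlocks 0 (fromCols C 0) (fromCols C 0)ᵀ
    (fromBlocks (diagonal w)⁻¹ ((2 * μ) • (diagonal r * A)) (diagonal r * A)ᵀ (Aᵀ * diagonal w * A))

theorem stationarityJacobian_mulVec (C : Matrix κ ι ℝ) (A : Matrix ι ν ℝ) {w : ι → ℝ}
    (hw : ∀ i, w i ≠ 0) (r : ι → ℝ) (μ : ℝ) (l : κ → ℝ) (y : ι → ℝ) (x : ν → ℝ) :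
    stationarityJacobian C A w r μ *ᵥ Sum.elim l (Sum.elim y x) =
      Sum.elim (C *ᵥ y)
        (Sum.elim (l ᵥ* C + w⁻¹ * y + (2 * μ) • (r * A *ᵥ x)) ((r * y + w * A *ᵥ x) ᵥ* A)) := by
  simp [stationarityJacobian, fromBlocks_mulVec, inv_diagonal_of_ne_zero hw, mulVec_transpose,
    ← mulVec_mulVec, diagonal_mulVec_eq_mul, smul_mulVec, add_vecMul, ← Sum.elim_add_add, add_assoc]

theorem dotProduct_mulVec_sqrt_mul_eq_sum {w : ι → ℝ} (hw : ∀ i, 0 ≤ w i) (r t : ι → ℝ) (μ : ℝ) :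
    ((fun i => Real.sqrt (w i)) * t) ⬝ᵥ
        ((1 - (2 * μ) • diagonal (fun i => r i ^ 2)) *ᵥ ((fun i => Real.sqrt (w i)) * t)) =
      ∑ i, w i * t i ^ 2 * (1 - 2 * μ * r i ^ 2) := by
  simp only [dotProduct, sub_mulVec, smul_mulVec, one_mulVec, diagonal_mulVec_eq_mul]
  refine Finset.sum_congr rfl fun i _ => ?_
  simp only [Pi.mul_apply, Pi.sub_apply, Pi.smul_apply, smul_eq_mul]
  linear_combination (t i ^ 2 * (1 - 2 * μ * r i ^ 2)) * Real.mul_self_sqrt (hw i)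

theorem stationarityJacobian_mulVec_eq_zero {C : Matrix κ ι ℝ} (hC : LinearIndependent ℝ C.row)
    {A : Matrix ι ν ℝ} (hA : Function.Injective A.mulVec) {w : ι → ℝ} (hw : ∀ i, 0 < w i)
    {μ : ℝ} (hμ : 0 < μ) {r : ι → ℝ}
    (hB : ∀ v : ι → ℝ, (∃ z : ν → ℝ, v = (diagonal (fun i => Real.sqrt (w i)) * A) *ᵥ z) →
      v ≠ 0 → 0 < v ⬝ᵥ ((1 - (2 * μ) • diagonal (fun i => r i ^ 2)) *ᵥ v))
    {z : κ ⊕ (ι ⊕ ν) → ℝ} (hz : stationarityJacobian C A w r μ *ᵥ z = 0) : z = 0 := by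
  obtain ⟨l, y, x, rfl⟩ : ∃ l y x, z = Sum.elim l (Sum.elim y x) :=
    ⟨_, _, _, by rw [Sum.elim_comp_inl_inr, Sum.elim_comp_inl_inr]⟩
  rw [stationarityJacobian_mulVec C A (fun i => (hw i).ne'), ← Sum.elim_zero_zero,
    ← Sum.elim_zero_zero, Sum.elim_eq_iff, Sum.elim_eq_iff] at hz
  obtain ⟨hCy, hrow, hcol⟩ := hz
  set t := A *ᵥ x
  set g := l ᵥ* C
  have hy : y = -(w * (g + (2 * μ) • (r * t))) := by
    funext i
    have := congrFun hrow i
    simp only [Pi.add_apply, Pi.mul_apply, Pi.inv_apply, Pi.smul_apply, smul_eq_mul,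
      Pi.zero_apply] at this
    simp only [Pi.neg_apply, Pi.mul_apply, Pi.add_apply, Pi.smul_apply, smul_eq_mul]
    field_simp [(hw i).ne'] at this
    linarith
  have hgy : g ⬝ᵥ y = 0 := by rw [← dotProduct_mulVec, hCy, dotProduct_zero]
  have hty : (r * y + w * t) ⬝ᵥ t = 0 := by rw [dotProduct_mulVec, hcol, zero_dotProduct]
  have henergy := stationarity_energy_identity hy
  rw [hgy, hty, mul_zero, sub_zero] at henergy
  have hG : 0 ≤ ∑ i, w i * g i ^ 2 :=
    Finset.sum_nonneg fun i _ => mul_nonneg (hw i).le (sq_nonneg (g i))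
  set v := (fun i => Real.sqrt (w i)) * t
  have hv : v = (diagonal (fun i => Real.sqrt (w i)) * A) *ᵥ x := by
    rw [← mulVec_mulVec, diagonal_mulVec_eq_mul]
  have hv0 : v = 0 := by
    by_contra hv0
    have hpos := hB v ⟨x, hv⟩ hv0
    rw [dotProduct_mulVec_sqrt_mul_eq_sum (fun i => (hw i).le)] at hpos
    nlinarith
  have ht : t = 0 := funext fun i => by
    simpa [v, Real.sqrt_ne_zero'.mpr (hw i)] using congrFun hv0 i
  have hg : g = 0 := eq_zero_of_sum_mul_sq_eq_zero hw (by simpa [ht] using henergy.symm)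
  have hl : l = 0 := vecMul_injective_iff.mpr hC (hg.trans (zero_vecMul C).symm)
  have hx : x = 0 := hA (ht.trans (mulVec_zero A).symm)
  rw [hy, hg, ht]
  simp [hl, hx]

theorem det_stationarityJacobian_ne_zero [DecidableEq κ] [DecidableEq ν] {C : Matrix κ ι ℝ}
    (hC : LinearIndependent ℝ C.row) {A : Matrix ι ν ℝ} (hA : Function.Injective A.mulVec)
    {w : ι → ℝ} (hw : ∀ i, 0 < w i) {μ : ℝ} (hμ : 0 < μ) {r : ι → ℝ}
    (hB : ∀ v : ι → ℝ, (∃ z : ν → ℝ, v = (diagonal (fun i => Real.sqrt (w i)) * A) *ᵥ z) →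
      v ≠ 0 → 0 < v ⬝ᵥ ((1 - (2 * μ) • diagonal (fun i => r i ^ 2)) *ᵥ v)) :
    (stationarityJacobian C A w r μ).det ≠ 0 := fun h =>
  let ⟨_, hz, hJz⟩ := exists_mulVec_eq_zero_iff.mpr h
  hz (stationarityJacobian_mulVec_eq_zero hC hA hw hμ hB hJz)

end Stationarity

theorem jacobian_nonsingular_general (m n : ℕ)
    (A : Matrix (Fin m) (Fin n) ℝ) (hA : A.rank = n)
    (w : Fin m → ℝ) (hw : ∀ i, 0 < w i)
    (μ : ℝ) (hμ : 0 < μ) (r : Fin m → ℝ)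
    (hindep : LinearIndependent ℝ
      ![(fun _ => 1 : Fin m → ℝ), (fun i => (r i) ^ 2 : Fin m → ℝ)])
    (hBpos : ∀ v : Fin m → ℝ,
      (∃ z : Fin n → ℝ,
        v = (Matrix.diagonal (fun i => Real.sqrt (w i)) * A) *ᵥ z) →
      v ≠ 0 →
      0 < v ⬝ᵥ ((1 - (2 * μ) • Matrix.diagonal (fun i => (r i) ^ 2)) *ᵥ v)) :
    let TR : Matrix (Fin 2) (Fin m ⊕ Fin n) ℝ :=
      fun i j => Sum.elim (fun k => if i = 0 then 1 else (r k) ^ 2) (fun _ => 0) j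
    let BL : Matrix (Fin m ⊕ Fin n) (Fin 2) ℝ :=
      fun i j => Sum.elim (fun k => if j = 0 then 1 else (r k) ^ 2) (fun _ => 0) i
    let BR : Matrix (Fin m ⊕ Fin n) (Fin m ⊕ Fin n) ℝ :=
      Matrix.fromBlocks (Matrix.diagonal w)⁻¹ ((2 * μ) • (Matrix.diagonal r * A))
        (Matrix.diagonal r * A)ᵀ (Aᵀ * Matrix.diagonal w * A)
    let J : Matrix (Fin 2 ⊕ (Fin m ⊕ Fin n)) (Fin 2 ⊕ (Fin m ⊕ Fin n)) ℝ :=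
      Matrix.fromBlocks 0 TR BL BR
    J.det ≠ 0 := by
  intro TR BL BR J
  have hTR : TR = fromCols (Matrix.of ![fun _ => 1, fun i => r i ^ 2]) 0 := by
    ext i (k | k) <;> fin_cases i <;> rfl
  have hJ : J = stationarityJacobian (Matrix.of ![fun _ => 1, fun i => r i ^ 2]) A w r μ := by
    rw [show J = fromBlocks 0 TR TRᵀ BR from rfl, hTR]
    rfl
  rw [hJ]
  exact det_stationarityJacobian_ne_zero hindep
    (mulVec_injective_of_rank_eq_card (hA.trans (Fintype.card_fin n).symm)) hw hμ hBpos

/-- Sufficient conditions for the invertibility of the Jacobian of the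
stationarity system. -/
theorem jacobian_nonsingular (m n : ℕ) (hmn : n ≤ m)
    (A : Matrix (Fin m) (Fin n) ℝ) (hA : A.rank = n)
    (w : Fin m → ℝ) (hw : ∀ i, 0 < w i) (hw1 : (∑ i, w i) = 1)
    (μ : ℝ) (hμ : 0 < μ) (r : Fin m → ℝ)
    (hindep : LinearIndependent ℝ
      ![(fun _ => 1 : Fin m → ℝ), (fun i => (r i) ^ 2 : Fin m → ℝ)])
    (hBpos : ∀ v : Fin m → ℝ,
      (∃ z : Fin n → ℝ,
        v = (Matrix.diagonal (fun i => Real.sqrt (w i)) * A) *ᵥ z) →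
      v ≠ 0 →
      0 < v ⬝ᵥ ((1 - (2 * μ) • Matrix.diagonal (fun i => (r i) ^ 2)) *ᵥ v)) :
    let TR : Matrix (Fin 2) (Fin m ⊕ Fin n) ℝ :=
      fun i j => Sum.elim (fun k => if i = 0 then 1 else (r k) ^ 2) (fun _ => 0) j
    let BL : Matrix (Fin m ⊕ Fin n) (Fin 2) ℝ :=
      fun i j => Sum.elim (fun k => if j = 0 then 1 else (r k) ^ 2) (fun _ => 0) i
    let BR : Matrix (Fin m ⊕ Fin n) (Fin m ⊕ Fin n) ℝ :=
      Matrix.fromBlocks (Matrix.diagonal w)⁻¹ ((2 * μ) • (Matrix.diagonal r * A))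
        (Matrix.diagonal r * A)ᵀ (Aᵀ * Matrix.diagonal w * A)
    let J : Matrix (Fin 2 ⊕ (Fin m ⊕ Fin n)) (Fin 2 ⊕ (Fin m ⊕ Fin n)) ℝ :=
      Matrix.fromBlocks 0 TR BL BR
    J.det ≠ 0 :=
  jacobian_nonsingular_general m n A hA w hw μ hμ r hindep hBpos
end

section
/- If the symmetric 2×2 block matrix H̃ = [[W⁻¹, 2μdiag(r)A],[2μ(diag(r)A)ᵀ, 2μAᵀWA]] is positive definite, and (α,β,γ,η) satisfies uᵀγ = 0, (r²)ᵀγ = 0, αu + βr² + W⁻¹γ + 2μdiag(r)Aη = 0, and (diag(r)A)ᵀγ + AᵀWAη = 0, and u, r² are linearly independent, then α = β = 0, γ = 0, η = 0. -/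
open Matrix

/-!
Pairing the first equation with `γ` and the second with `η` shows that `(γ, η)` is isotropic
for `H̃`, so positive definiteness forces `γ = 0` and `η = 0`; the first equation then reads
`α u + β r² = 0`, and linear independence gives `α = β = 0`.
-/

theorem Matrix.PosDef.eq_zero_of_dotProduct_mulVec_self_eq_zero {n R : Type*} [Fintype n]
    [Ring R] [PartialOrder R] [StarRing R] {M : Matrix n n R} (hM : M.PosDef) {x : n → R}
    (hx : star x ⬝ᵥ (M *ᵥ x) = 0) : x = 0 := by
  by_contra h
  exact (hM.dotProduct_mulVec_pos h).ne' hx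

theorem Matrix.sumElim_dotProduct_fromBlocks_mulVec_sumElim {m n R : Type*} [Fintype m]
    [Fintype n] [NonUnitalNonAssocSemiring R] (A : Matrix m m R) (B : Matrix m n R)
    (C : Matrix n m R) (D : Matrix n n R) (x : m → R) (y : n → R) :
    Sum.elim x y ⬝ᵥ (fromBlocks A B C D *ᵥ Sum.elim x y) =
      x ⬝ᵥ (A *ᵥ x + B *ᵥ y) + y ⬝ᵥ (C *ᵥ x + D *ᵥ y) := by
  rw [fromBlocks_mulVec, sumElim_dotProduct_sumElim, Sum.elim_comp_inl, Sum.elim_comp_inr]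

theorem kernel_trivial_general (m n : ℕ)
    (A : Matrix (Fin m) (Fin n) ℝ)
    (w : Fin m → ℝ) (μ : ℝ) (r : Fin m → ℝ)
    (Ht : Matrix (Fin m ⊕ Fin n) (Fin m ⊕ Fin n) ℝ)
    (hHt : Ht = Matrix.fromBlocks (Matrix.diagonal w)⁻¹
      ((2 * μ) • (Matrix.diagonal r * A))
      ((2 * μ) • (Matrix.diagonal r * A)ᵀ)
      ((2 * μ) • (Aᵀ * Matrix.diagonal w * A)))
    (hpos : Ht.PosDef)
    (hindep : LinearIndependent ℝ
      ![(fun _ => 1 : Fin m → ℝ), (fun i => (r i) ^ 2 : Fin m → ℝ)])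
    (α β : ℝ) (γ : Fin m → ℝ) (η : Fin n → ℝ)
    (h1 : (fun _ => (1 : ℝ)) ⬝ᵥ γ = 0)
    (h2 : (fun i => (r i) ^ 2) ⬝ᵥ γ = 0)
    (h3 : (fun i => α * 1 + β * (r i) ^ 2) + (Matrix.diagonal w)⁻¹ *ᵥ γ +
      (2 * μ) • ((Matrix.diagonal r * A) *ᵥ η) = 0)
    (h4 : (Matrix.diagonal r * A)ᵀ *ᵥ γ + (Aᵀ * Matrix.diagonal w * A) *ᵥ η = 0) :
    α = 0 ∧ β = 0 ∧ γ = 0 ∧ η = 0 := by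
  have hcomb : (fun i => α * 1 + β * (r i) ^ 2) = α • (fun _ => (1 : ℝ)) + β • fun i => r i ^ 2 :=
    rfl
  have hfirst : γ ⬝ᵥ ((diagonal w)⁻¹ *ᵥ γ + ((2 * μ) • (diagonal r * A)) *ᵥ η) = 0 := by
    rw [add_assoc, hcomb] at h3
    rw [smul_mulVec, eq_neg_of_add_eq_zero_right h3, dotProduct_neg, dotProduct_add,
      dotProduct_smul, dotProduct_smul, dotProduct_comm, h1, dotProduct_comm, h2]
    simp
  have hsecond : ((2 * μ) • (diagonal r * A)ᵀ) *ᵥ γ + ((2 * μ) • (Aᵀ * diagonal w * A)) *ᵥ η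
      = 0 := by
    rw [smul_mulVec, smul_mulVec, ← smul_add, h4, smul_zero]
  have hγη : Sum.elim γ η = 0 := by
    refine hpos.eq_zero_of_dotProduct_mulVec_self_eq_zero ?_
    rw [hHt, star_trivial, sumElim_dotProduct_fromBlocks_mulVec_sumElim, hfirst, hsecond,
      dotProduct_zero, add_zero]
  obtain ⟨rfl, rfl⟩ := Sum.elim_eq_iff.mp (hγη.trans Sum.elim_zero_zero.symm)
  rw [mulVec_zero, mulVec_zero, smul_zero, add_zero, add_zero, hcomb] at h3
  obtain ⟨rfl, rfl⟩ := LinearIndependent.pair_iff.mp hindep α β h3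
  exact ⟨rfl, rfl, rfl, rfl⟩

/-- Kernel triviality step: if the bordered block `H̃` is positive definite and
`u, r²` are linearly independent, the homogeneous system has only the trivial
solution. -/
theorem kernel_trivial (m n : ℕ) (hmn : n ≤ m)
    (A : Matrix (Fin m) (Fin n) ℝ)
    (w : Fin m → ℝ) (hw : ∀ i, 0 < w i) (μ : ℝ) (hμ : 0 < μ) (r : Fin m → ℝ)
    (Ht : Matrix (Fin m ⊕ Fin n) (Fin m ⊕ Fin n) ℝ)
    (hHt : Ht = Matrix.fromBlocks (Matrix.diagonal w)⁻¹
      ((2 * μ) • (Matrix.diagonal r * A))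
      ((2 * μ) • (Matrix.diagonal r * A)ᵀ)
      ((2 * μ) • (Aᵀ * Matrix.diagonal w * A)))
    (hpos : Ht.PosDef)
    (hindep : LinearIndependent ℝ
      ![(fun _ => 1 : Fin m → ℝ), (fun i => (r i) ^ 2 : Fin m → ℝ)])
    (α β : ℝ) (γ : Fin m → ℝ) (η : Fin n → ℝ)
    (h1 : (fun _ => (1 : ℝ)) ⬝ᵥ γ = 0)
    (h2 : (fun i => (r i) ^ 2) ⬝ᵥ γ = 0)
    (h3 : (fun i => α * 1 + β * (r i) ^ 2) + (Matrix.diagonal w)⁻¹ *ᵥ γ +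
      (2 * μ) • ((Matrix.diagonal r * A) *ᵥ η) = 0)
    (h4 : (Matrix.diagonal r * A)ᵀ *ᵥ γ + (Aᵀ * Matrix.diagonal w * A) *ᵥ η = 0) :
    α = 0 ∧ β = 0 ∧ γ = 0 ∧ η = 0 :=
  kernel_trivial_general m n A w μ r Ht hHt hpos hindep α β γ η h1 h2 h3 h4
end

section
/- Suppose A ∈ ℝ^{m×n} satisfies AᵀWA ⪰ s₀² I_n for a diagonal W = diag(w) with w_i ≥ 0 and ∑_i w_i = 1, and some s₀ > 0. Let ε₀ = s₀²/‖A‖², and let I = {i : w_i ≥ ε₀}. Then |I| ≥ n, and the submatrix of A formed by the rows indexed by I has full column rank n. -/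
/-!
If `v ≠ 0` were annihilated by every row `aᵢ` with `wᵢ ≥ ε₀`, then `u = A v ≠ 0` is supported
on rows with `wᵢ < ε₀`, so
`s₀² ‖v‖² ≤ ∑ wᵢ uᵢ² < ε₀ ‖u‖² ≤ ε₀ ‖A‖² ‖v‖² ≤ s₀² ‖v‖²`.
Hence the rows indexed by `I` act injectively, which gives rank `n` and in particular `|I| ≥ n`.
-/

open Matrix Finset

theorem Matrix.rank_eq_card_width_of_mulVec_injective {m n R : Type*} [Fintype m] [Fintype n]
    [CommRing R] [StrongRankCondition R] {B : Matrix m n R} (h : Function.Injective B.mulVec) :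
    B.rank = Fintype.card n := by
  rw [Matrix.rank, LinearMap.finrank_range_of_inj h, Module.finrank_fintype_fun_eq_card]

theorem Matrix.dotProduct_transpose_mul_diagonal_mul_mulVec {m n R : Type*} [Fintype m]
    [Fintype n] [DecidableEq m] [CommSemiring R] (A : Matrix m n R) (w : m → R) (v : n → R) :
    v ⬝ᵥ ((Aᵀ * diagonal w * A) *ᵥ v) = ∑ i, w i * (A *ᵥ v) i ^ 2 := by
  rw [← mulVec_mulVec, ← mulVec_mulVec, dotProduct_mulVec, vecMul_transpose]
  simp only [dotProduct, mulVec_diagonal, sq, mul_left_comm]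

theorem sum_mul_sq_lt_of_lt_on_support {ι : Type*} [Fintype ι] {w u : ι → ℝ} {ε : ℝ}
    (hw : ∀ i, u i ≠ 0 → w i < ε) (hu : u ≠ 0) :
    ∑ i, w i * u i ^ 2 < ε * (u ⬝ᵥ u) := by
  rw [dotProduct, Finset.mul_sum]
  obtain ⟨i₀, hi₀⟩ := Function.ne_iff.mp hu
  refine Finset.sum_lt_sum (fun i _ => ?_) ⟨i₀, Finset.mem_univ _, ?_⟩
  · rcases eq_or_ne (u i) 0 with h | h
    · simp [h]
    · rw [← sq]; exact mul_le_mul_of_nonneg_right (hw i h).le (sq_nonneg _)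
  · rw [← sq]; exact mul_lt_mul_of_pos_right (hw i₀ hi₀) (pow_two_pos_of_ne_zero hi₀)

theorem Matrix.eq_zero_of_mulVec_eq_zero_on_heavy_rows {m n : Type*} [Fintype m] [Fintype n]
    [DecidableEq m] {A : Matrix m n ℝ} {w : m → ℝ} {s₀ nA : ℝ} (hs₀ : 0 < s₀)
    (hcoer : ∀ v : n → ℝ, s₀ ^ 2 * (v ⬝ᵥ v) ≤ v ⬝ᵥ ((Aᵀ * diagonal w * A) *ᵥ v))
    (hspec : ∀ v : n → ℝ, (A *ᵥ v) ⬝ᵥ (A *ᵥ v) ≤ nA ^ 2 * (v ⬝ᵥ v))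
    {v : n → ℝ} (hv : ∀ i, s₀ ^ 2 / nA ^ 2 ≤ w i → (A *ᵥ v) i = 0) : v = 0 := by
  by_contra hv₀
  have hvv : 0 < v ⬝ᵥ v := by simpa using dotProduct_self_star_pos_iff.mpr hv₀
  have hlower := hcoer v
  rw [dotProduct_transpose_mul_diagonal_mul_mulVec] at hlower
  have hAv : A *ᵥ v ≠ 0 := by
    intro h
    exact (mul_pos (pow_pos hs₀ 2) hvv).not_ge (by simpa [h] using hlower)
  -- with the junk value `s₀² / 0 = 0`, this also holds for `nA = 0`
  have hratio : s₀ ^ 2 / nA ^ 2 * nA ^ 2 ≤ s₀ ^ 2 := by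
    rcases eq_or_ne nA 0 with h | h
    · simpa [h] using sq_nonneg s₀
    · rw [div_mul_cancel₀ _ (pow_ne_zero 2 h)]
  refine lt_irrefl (s₀ ^ 2 * (v ⬝ᵥ v)) ?_
  calc s₀ ^ 2 * (v ⬝ᵥ v)
      ≤ ∑ i, w i * (A *ᵥ v) i ^ 2 := hlower
    _ < s₀ ^ 2 / nA ^ 2 * ((A *ᵥ v) ⬝ᵥ (A *ᵥ v)) :=
        sum_mul_sq_lt_of_lt_on_support (fun i hi => lt_of_not_ge (mt (hv i) hi)) hAv
    _ ≤ s₀ ^ 2 / nA ^ 2 * (nA ^ 2 * (v ⬝ᵥ v)) :=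
        mul_le_mul_of_nonneg_left (hspec v) (by positivity)
    _ ≤ s₀ ^ 2 * (v ⬝ᵥ v) := by
        rw [← mul_assoc]; exact mul_le_mul_of_nonneg_right hratio hvv.le

theorem core_index_set_general (m n : ℕ)
    (A : Matrix (Fin m) (Fin n) ℝ)
    (w : Fin m → ℝ)
    (s₀ : ℝ) (hs₀ : 0 < s₀)
    (hcoer : ∀ v : Fin n → ℝ,
      s₀ ^ 2 * (v ⬝ᵥ v) ≤ v ⬝ᵥ ((Aᵀ * Matrix.diagonal w * A) *ᵥ v))
    (nA : ℝ)
    (hspec : ∀ v : Fin n → ℝ, (A *ᵥ v) ⬝ᵥ (A *ᵥ v) ≤ nA ^ 2 * (v ⬝ᵥ v))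
    (ε₀ : ℝ) (hε₀ : ε₀ = s₀ ^ 2 / nA ^ 2)
    (I : Finset (Fin m)) (hI : I = {i : Fin m | ε₀ ≤ w i}.toFinset) :
    n ≤ I.card ∧
    (A.submatrix (Subtype.val : {i // i ∈ I} → Fin m) id).rank = n := by
  set B := A.submatrix (Subtype.val : {i // i ∈ I} → Fin m) id
  have hinj : Function.Injective B.mulVec := by
    intro x y hxy
    rw [← sub_eq_zero]
    refine eq_zero_of_mulVec_eq_zero_on_heavy_rows hs₀ hcoer hspec fun i hi => ?_
    have hiI : i ∈ I := by simpa [hI, hε₀] using hi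
    rw [mulVec_sub, Pi.sub_apply, sub_eq_zero]
    exact congrFun hxy ⟨i, hiI⟩
  have hrank : B.rank = n := by simpa using rank_eq_card_width_of_mulVec_injective hinj
  exact ⟨by simpa [hrank] using rank_le_card_height B, hrank⟩

/-- Under uniform coercivity of `AᵀWA`, the set of indices whose weight exceeds
`ε₀ = s₀²/‖A‖²` has cardinality at least `n` and the corresponding rows of `A`
have full column rank. -/
theorem core_index_set (m n : ℕ)
    (A : Matrix (Fin m) (Fin n) ℝ) (b : Fin m → ℝ)
    (w : Fin m → ℝ) (hw : ∀ i, 0 ≤ w i) (hw1 : (∑ i, w i) = 1)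
    (s₀ : ℝ) (hs₀ : 0 < s₀)
    (hcoer : ∀ v : Fin n → ℝ,
      s₀ ^ 2 * (v ⬝ᵥ v) ≤ v ⬝ᵥ ((Aᵀ * Matrix.diagonal w * A) *ᵥ v))
    (nA : ℝ) (hnA : 0 < nA)
    (hspec : ∀ v : Fin n → ℝ, (A *ᵥ v) ⬝ᵥ (A *ᵥ v) ≤ nA ^ 2 * (v ⬝ᵥ v))
    (ε₀ : ℝ) (hε₀ : ε₀ = s₀ ^ 2 / nA ^ 2)
    (I : Finset (Fin m)) (hI : I = {i : Fin m | ε₀ ≤ w i}.toFinset) :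
    n ≤ I.card ∧
    (A.submatrix (Subtype.val : {i // i ∈ I} → Fin m) id).rank = n :=
  core_index_set_general m n A w s₀ hs₀ hcoer nA hspec ε₀ hε₀ I hI
end
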